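/- In the symmetric group S₅ there exist elements a and b such that a has order 2, b has order 4, the product a·b has order 6, and a and b generate S₅. -/
import Mathlib

open Equiv Equiv.Perm Subgroup
set_option maxRecDepth 10000

private def aa : Equiv.Perm (Fin 5) := Equiv.swap 0 2 * Equiv.swap 1 4
private def bb : Equiv.Perm (Fin 5) := Equiv.swap 0 1 * Equiv.swap 1 2 * Equiv.swap 2 3

theorem S5_skg_246 : ∃ a b : Equiv.Perm (Fin 5),
    orderOf a = 2 ∧ orderOf b = 4 ∧ orderOf (a * b) = 6 ∧
    Subgroup.closure {a, b} = (⊤ : Subgroup (Equiv.Perm (Fin 5))) := by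
  haveI : Fact (Nat.Prime 2) := ⟨by norm_num⟩
  haveI : Fact (Nat.Prime 5) := ⟨by norm_num⟩
  refine ⟨aa, bb, ?_, ?_, ?_, ?_⟩
  · exact orderOf_eq_prime (by decide) (by decide)
  · exact orderOf_eq_prime_pow (p := 2) (n := 1) (by decide) (by decide)
  · refine orderOf_eq_of_pow_and_pow_div_prime (by norm_num) (by decide) ?_
    intro p hp hpd
    have h1 := hp.two_le
    have h2 := Nat.le_of_dvd (by norm_num) hpd
    interval_cases p <;> simp_all <;> decide
  · set σ : Equiv.Perm (Fin 5) := bb * (aa * bb) ^ 3 * aa * bb ^ 2 with hσ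
    have hσ5 : orderOf σ = 5 := orderOf_eq_prime (by decide) (by decide)
    have hcyc : σ.IsCycle := isCycle_of_prime_order'' (by decide) (by simp [hσ5])
    have hsupp : σ.support = Finset.univ := by decide
    have hswap : Equiv.Perm.IsSwap ((aa * bb) ^ 3) :=
      ⟨2, 3, by decide, by decide⟩
    have hmem1 : σ ∈ Subgroup.closure ({aa, bb} : Set (Equiv.Perm (Fin 5))) := by
      have ha : aa ∈ Subgroup.closure ({aa, bb} : Set (Equiv.Perm (Fin 5))) :=
        subset_closure (Set.mem_insert _ _)
      have hb : bb ∈ Subgroup.closure ({aa, bb} : Set (Equiv.Perm (Fin 5))) :=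
        subset_closure (Set.mem_insert_of_mem _ rfl)
      exact mul_mem (mul_mem (mul_mem hb (pow_mem (mul_mem ha hb) 3)) ha) (pow_mem hb 2)
    have hmem2 : (aa * bb) ^ 3 ∈ Subgroup.closure ({aa, bb} : Set (Equiv.Perm (Fin 5))) := by
      have ha : aa ∈ Subgroup.closure ({aa, bb} : Set (Equiv.Perm (Fin 5))) :=
        subset_closure (Set.mem_insert _ _)
      have hb : bb ∈ Subgroup.closure ({aa, bb} : Set (Equiv.Perm (Fin 5))) :=
        subset_closure (Set.mem_insert_of_mem _ rfl)
      exact pow_mem (mul_mem ha hb) 3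
    have htop : Subgroup.closure ({σ, (aa * bb) ^ 3} : Set (Equiv.Perm (Fin 5))) = ⊤ :=
      closure_prime_cycle_swap (by norm_num) hcyc hsupp hswap
    rw [eq_top_iff, ← htop]
    exact closure_le _ |>.mpr (by
      rintro x (rfl | rfl)
      exacts [hmem1, hmem2])
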